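/- Let M and N be finite matroids on disjoint ground sets, with rank functions r_M and r_N. Let Z' = { X : X is a cyclic flat of M with X ≠ E(M) } ∪ { E(M) ∪ Y : Y is a cyclic flat of N with Y ≠ ∅ }, and let Z = Z' ∪ {E(M)} if M has no coloops and N has no loops, and Z = Z' otherwise. Then there exists a matroid P on E(M) ∪ E(N) whose collection of cyclic flats is exactly Z, with r_P(X) = r_M(X) for each cyclic flat X of M with X ≠ E(M) (and for E(M) itself when E(M) ∈ Z), and r_P(E(M) ∪ Y) = r_M(E(M)) + r_N(Y) for each nonempty cyclic flat Y of N. -/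

import Mathlib

namespace Matroid

variable {α β : Type*}

/-- A circuit of a matroid: a minimal dependent set. -/
def IsCircuit' (M : Matroid α) (C : Set α) : Prop :=
  M.Dep C ∧ ∀ D, D ⊂ C → M.Indep D

/-- A cyclic flat: a flat that is a (possibly empty) union of circuits. -/
def CyclicFlat (M : Matroid α) (X : Set α) : Prop :=
  M.IsFlat X ∧ ∀ e ∈ X, ∃ C, M.IsCircuit' C ∧ C ⊆ X ∧ e ∈ C

/-- The rank of a set: the maximum size of an independent subset. -/
noncomputable def rk (M : Matroid α) (X : Set α) : ℕ :=
  sSup {n | ∃ I, M.Indep I ∧ I ⊆ X ∧ I.ncard = n}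

/-- Deletion of a set from a matroid. -/
def del (M : Matroid α) (D : Set α) : Matroid α := M ↾ (M.E \ D)

/-- Contraction of a set in a matroid. -/
def con (M : Matroid α) (C : Set α) : Matroid α := (M✶ ↾ (M.E \ C))✶

/-- `N` is a minor of `M` if it is obtained from `M` by a contraction and a deletion. -/
def IsMinorOf (N M : Matroid α) : Prop := ∃ C D, N = (M.con C).del D

/-- Matroid isomorphism: a bijection of ground sets preserving independence. -/
def IsIsoTo (M : Matroid α) (N : Matroid β) : Prop :=
  ∃ e : M.E ≃ N.E, ∀ I : Set M.E,
    M.Indep (Subtype.val '' I) ↔ N.Indep (Subtype.val '' (e '' I))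

end Matroid

/-!
The free product is realised by declaring `I` independent when `I ∩ E(M)` is independent in `M`
and `|I| ≤ r(M) + r_N(I ∩ E(N))`. Its rank function is
`r(A ∪ B) = min (r_M(A) + |B|) (r(M) + r_N(B))` for `A ⊆ E(M)`, `B ⊆ E(N)`: it agrees with
`r_M` below `E(M)` and equals `r(M) + r_N` above it.

A set is a cyclic flat exactly when deleting any of its elements keeps the rank and adding any
other element raises it, so the cyclic flats can be read off this formula. A cyclic flat that
meets `E(N)` contains `E(M)`: otherwise adding an element of `E(M)` raises the rank only if the
first term of the minimum is the smaller one, and then deleting an element of `E(N)` lowers it.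
Cyclic flats inside `E(M)` are those of `M`, with `E(M)` itself flat in `P` exactly when `N` has
no loops; cyclic flats `E(M) ∪ Y` with `Y ≠ ∅` correspond to cyclic flats `Y` of `N`, the
dependence of `Y` absorbing the rank lost by deleting an element of `E(M)`.
-/

namespace Set

variable {α : Type*} {S T A B X Y : Set α} {e : α}

lemma union_inter_eq_left_of_disjoint (hST : Disjoint S T) (hA : A ⊆ S) (hB : B ⊆ T) :
    (A ∪ B) ∩ S = A := by
  rw [union_inter_distrib_right, inter_eq_left.2 hA,
    (hST.symm.mono_left hB).inter_eq, union_empty]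

lemma union_inter_eq_right_of_disjoint (hST : Disjoint S T) (hA : A ⊆ S) (hB : B ⊆ T) :
    (A ∪ B) ∩ T = B := by
  rw [union_comm, union_inter_eq_left_of_disjoint hST.symm hB hA]

lemma inter_union_inter_eq (hX : X ⊆ S ∪ T) : X ∩ S ∪ X ∩ T = X := by
  rw [← inter_union_distrib_left, inter_eq_left.2 hX]

lemma union_sdiff_singleton_of_notMem_left (he : e ∉ S) :
    (S ∪ Y) \ {e} = S ∪ (Y \ {e}) := by
  rw [union_sdiff_distrib, sdiff_singleton_eq_self he]

lemma union_sdiff_singleton_of_notMem_right (he : e ∉ Y) :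
    (S ∪ Y) \ {e} = (S \ {e}) ∪ Y := by
  rw [union_sdiff_distrib, sdiff_singleton_eq_self he]

end Set

namespace Matroid

variable {α : Type*} {M : Matroid α} {C I J X Y : Set α} {e : α}

lemma isCircuit'_iff : M.IsCircuit' C ↔ M.IsCircuit C :=
  isCircuit_iff_forall_ssubset.symm

lemma cyclicFlat_iff_forall_mem_closure :
    M.CyclicFlat X ↔ M.IsFlat X ∧ ∀ e ∈ X, e ∈ M.closure (X \ {e}) := by
  refine and_congr_right fun _ ↦ forall₂_congr fun e he ↦ ?_
  rw [mem_closure_iff_exists_isCircuit (fun h ↦ h.2 rfl), Set.insert_sdiff_self_of_mem he]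
  simp only [isCircuit'_iff]
  exact ⟨fun ⟨C, hC, hCX, heC⟩ ↦ ⟨C, hCX, hC, heC⟩,
    fun ⟨C, hCX, hC, heC⟩ ↦ ⟨C, hC, hCX, heC⟩⟩

lemma cyclicFlat_ground_iff : M.CyclicFlat M.E ↔ ∀ e ∈ M.E, ¬ M.IsColoop e := by
  refine ⟨fun h e he hcol ↦ ?_, fun h ↦ ⟨M.ground_isFlat, fun e he ↦ ?_⟩⟩
  · obtain ⟨C, hC, -, heC⟩ := h.2 e he
    exact (isCircuit'_iff.1 hC).not_isColoop_of_mem heC hcol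
  · obtain ⟨C, hC, heC⟩ := exists_mem_isCircuit_of_not_isColoop he (h e he)
    exact ⟨C, isCircuit'_iff.2 hC, hC.subset_ground, heC⟩

lemma exists_isBase_notMem_iff : (∃ B, M.IsBase B ∧ e ∉ B) ↔ ¬ M.IsColoop e := by
  simp [isColoop_iff_forall_mem_isBase]

lemma exists_isBase_mem_iff : (∃ B, M.IsBase B ∧ e ∈ B) ↔ M.IsNonloop e :=
  ⟨fun ⟨_, hB, heB⟩ ↦ hB.indep.isNonloop_of_mem heB, IsNonloop.exists_mem_isBase⟩

section Rank

variable [M.RankFinite]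

lemma IsBasis'.rk_eq_ncard (hI : M.IsBasis' I X) : M.rk X = I.ncard := by
  refine IsGreatest.csSup_eq ⟨⟨I, hI.indep, hI.subset, rfl⟩, ?_⟩
  rintro _ ⟨J, hJ, hJX, rfl⟩
  have hle := (hJ.encard_le_eRk_of_subset hJX).trans_eq hI.encard_eq_eRk.symm
  rwa [← hJ.finite.cast_ncard_eq, ← hI.indep.finite.cast_ncard_eq, Nat.cast_le] at hle

lemma cast_rk (M : Matroid α) [M.RankFinite] (X : Set α) : (M.rk X : ℕ∞) = M.eRk X := by
  obtain ⟨I, hI⟩ := M.exists_isBasis' X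
  rw [hI.rk_eq_ncard, hI.indep.finite.cast_ncard_eq, hI.encard_eq_eRk]

lemma rk_mono (h : X ⊆ Y) : M.rk X ≤ M.rk Y := by
  exact_mod_cast (M.cast_rk X).trans_le ((M.eRk_mono h).trans_eq (M.cast_rk Y).symm)

lemma Indep.rk_eq_ncard (hI : M.Indep I) : M.rk I = I.ncard :=
  hI.isBasis_self.isBasis'.rk_eq_ncard

lemma Indep.ncard_le_rk (hI : M.Indep I) (hIX : I ⊆ X) : I.ncard ≤ M.rk X :=
  hI.rk_eq_ncard ▸ rk_mono hIX

lemma rk_le_ncard (hX : X.Finite) : M.rk X ≤ X.ncard := by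
  have := (M.cast_rk X).trans_le (M.eRk_le_encard X)
  rwa [← hX.cast_ncard_eq, Nat.cast_le] at this

lemma rk_insert_le (X : Set α) (e : α) : M.rk (insert e X) ≤ M.rk X + 1 := by
  have := M.eRk_insert_le_add_one e X
  rw [← cast_rk, ← cast_rk] at this
  exact_mod_cast this

lemma rk_le_rk_sdiff_singleton_add_one (X : Set α) (e : α) : M.rk X ≤ M.rk (X \ {e}) + 1 :=
  (rk_mono (Set.subset_insert_sdiff_singleton e X)).trans (rk_insert_le _ e)

lemma rk_union_le_rk_add_ncard (X : Set α) (hY : Y.Finite) :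
    M.rk (X ∪ Y) ≤ M.rk X + Y.ncard := by
  have := M.eRk_union_le_eRk_add_encard X Y
  rw [← cast_rk, ← cast_rk, ← hY.cast_ncard_eq] at this
  exact_mod_cast this

lemma Indep.exists_insert_of_ncard_lt (hI : M.Indep I) (hJ : M.Indep J)
    (h : I.ncard < J.ncard) : ∃ e ∈ J \ I, M.Indep (insert e I) :=
  hI.augment hJ <| by rwa [← hI.finite.cast_ncard_eq, ← hJ.finite.cast_ncard_eq, Nat.cast_lt]

lemma exists_rk_insert_eq_add_one_of_lt (h : M.rk X < M.rk Y) :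
    ∃ e ∈ Y \ X, M.rk (insert e X) = M.rk X + 1 := by
  rw [← Nat.cast_lt (α := ℕ∞), cast_rk, cast_rk] at h
  obtain ⟨e, he, hins⟩ := exists_eRk_insert_eq_add_one_of_lt h
  refine ⟨e, he, ?_⟩
  rw [← cast_rk, ← cast_rk] at hins
  exact_mod_cast hins

lemma mem_closure_iff_rk_insert_eq (he : e ∈ M.E) :
    e ∈ M.closure X ↔ M.rk (insert e X) = M.rk X := by
  refine ⟨fun hcl ↦ ?_, fun h ↦ by_contra fun hcl ↦ ?_⟩
  · have := (M.eRk_insert_closure_eq e X).symm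
    rw [Set.insert_eq_of_mem hcl, eRk_closure_eq, ← cast_rk, ← cast_rk] at this
    exact_mod_cast this
  · have := eRk_insert_eq_add_one (M := M) ⟨he, hcl⟩
    rw [← cast_rk, ← cast_rk, h] at this
    norm_cast at this
    omega

lemma isFlat_iff_rk :
    M.IsFlat X ↔ X ⊆ M.E ∧ ∀ e ∈ M.E \ X, M.rk (insert e X) ≠ M.rk X := by
  rw [isFlat_iff_closure_eq]
  refine ⟨fun h ↦ ⟨h ▸ M.closure_subset_ground X, fun e he hrk ↦ he.2 ?_⟩,
    fun ⟨hX, h⟩ ↦ ?_⟩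
  · exact h ▸ (mem_closure_iff_rk_insert_eq he.1).2 hrk
  · refine (M.subset_closure X hX).antisymm' fun e he ↦ by_contra fun heX ↦ ?_
    have heE := M.closure_subset_ground X he
    exact h e ⟨heE, heX⟩ ((mem_closure_iff_rk_insert_eq heE).1 he)

lemma cyclicFlat_iff_rk : M.CyclicFlat X ↔ X ⊆ M.E ∧
    (∀ e ∈ M.E \ X, M.rk (insert e X) ≠ M.rk X) ∧ ∀ e ∈ X, M.rk (X \ {e}) = M.rk X := by
  rw [cyclicFlat_iff_forall_mem_closure, isFlat_iff_rk, and_assoc]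
  refine and_congr_right fun hX ↦ and_congr_right fun _ ↦ forall₂_congr fun e he ↦ ?_
  rw [mem_closure_iff_rk_insert_eq (hX he), Set.insert_sdiff_self_of_mem he, eq_comm]

lemma IsFlat.rk_lt_rk_ground (hX : M.IsFlat X) (hne : X ≠ M.E) : M.rk X < M.rk M.E := by
  obtain ⟨hXE, hflat⟩ := isFlat_iff_rk.1 hX
  obtain ⟨e, he⟩ := Set.nonempty_of_ssubset (hXE.ssubset_of_ne hne)
  have := rk_mono (M := M) (Set.subset_insert e X)
  have := rk_mono (M := M) (Set.insert_subset he.1 hXE)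
  have := hflat e he
  omega

lemma CyclicFlat.rk_lt_ncard [M.Finite] (hX : M.CyclicFlat X) (hne : X.Nonempty) :
    M.rk X < X.ncard := by
  obtain ⟨hXE, -, hcyc⟩ := cyclicFlat_iff_rk.1 hX
  obtain ⟨e, he⟩ := hne
  have hXfin := M.ground_finite.subset hXE
  rw [← hcyc e he, ← Set.ncard_sdiff_singleton_add_one he hXfin]
  exact Nat.lt_succ_of_le (rk_le_ncard (hXfin.subset Set.sdiff_subset))

lemma isNonloop_iff_rk_singleton : M.IsNonloop e ↔ M.rk {e} = 1 := by
  rw [← eRk_singleton_eq_one_iff, ← cast_rk, Nat.cast_eq_one]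

end Rank

section FreeProduct

variable {N : Matroid α} {A B : Set α}

def FreeProductIndep (M N : Matroid α) (I : Set α) : Prop :=
  I ⊆ M.E ∪ N.E ∧ M.Indep (I ∩ M.E) ∧
    (I ∩ M.E).ncard + (I ∩ N.E).ncard ≤ M.rk M.E + N.rk (I ∩ N.E)

lemma freeProductIndep_union_iff (hMN : Disjoint M.E N.E) (hA : A ⊆ M.E) (hB : B ⊆ N.E) :
    FreeProductIndep M N (A ∪ B) ↔ M.Indep A ∧ A.ncard + B.ncard ≤ M.rk M.E + N.rk B := by
  rw [FreeProductIndep, Set.union_inter_eq_left_of_disjoint hMN hA hB,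
    Set.union_inter_eq_right_of_disjoint hMN hA hB, and_iff_right (Set.union_subset_union hA hB)]

lemma FreeProductIndep.subset [M.Finite] [N.Finite] (hJ : FreeProductIndep M N J) (hIJ : I ⊆ J) :
    FreeProductIndep M N I := by
  obtain ⟨hJE, hJM, hJcard⟩ := hJ
  have hIN : I ∩ N.E ⊆ J ∩ N.E := Set.inter_subset_inter_left _ hIJ
  have hM := Set.ncard_le_ncard (Set.inter_subset_inter_left M.E hIJ)
    (M.ground_finite.subset Set.inter_subset_right)
  have hN := Set.ncard_sdiff_add_ncard_of_subset hIN (N.ground_finite.subset Set.inter_subset_right)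
  have hrk := N.rk_union_le_rk_add_ncard (I ∩ N.E) (Y := (J ∩ N.E) \ (I ∩ N.E))
    (N.ground_finite.subset (Set.sdiff_subset.trans Set.inter_subset_right))
  rw [Set.union_sdiff_cancel hIN] at hrk
  exact ⟨hIJ.trans hJE, hJM.subset (Set.inter_subset_inter_left _ hIJ), by omega⟩

lemma FreeProductIndep.insert_of_mem_right [N.Finite] (hMN : Disjoint M.E N.E)
    (hI : FreeProductIndep M N I) (he : e ∈ N.E) (heI : e ∉ I)
    (h : (I ∩ M.E).ncard + (I ∩ N.E).ncard < M.rk M.E + N.rk (insert e (I ∩ N.E))) :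
    FreeProductIndep M N (insert e I) := by
  obtain ⟨hIE, hIM, -⟩ := hI
  have heM : e ∉ M.E := hMN.notMem_of_mem_right he
  refine ⟨Set.insert_subset (Or.inr he) hIE, by rwa [Set.insert_inter_of_notMem heM], ?_⟩
  rw [Set.insert_inter_of_notMem heM, Set.insert_inter_of_mem he,
    Set.ncard_insert_of_notMem (fun h ↦ heI h.1) (N.ground_finite.subset Set.inter_subset_right)]
  omega

lemma FreeProductIndep.insert_of_mem_left [M.Finite] (hMN : Disjoint M.E N.E)
    (hI : FreeProductIndep M N I) (he : e ∈ M.E) (heI : e ∉ I)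
    (hMe : M.Indep (insert e (I ∩ M.E)))
    (h : (I ∩ M.E).ncard + (I ∩ N.E).ncard < M.rk M.E + N.rk (I ∩ N.E)) :
    FreeProductIndep M N (insert e I) := by
  have heN : e ∉ N.E := hMN.notMem_of_mem_left he
  refine ⟨Set.insert_subset (Or.inl he) hI.1, by rwa [Set.insert_inter_of_mem he], ?_⟩
  rw [Set.insert_inter_of_mem he, Set.insert_inter_of_notMem heN,
    Set.ncard_insert_of_notMem (fun h ↦ heI h.1) (M.ground_finite.subset Set.inter_subset_right)]
  omega

lemma ncard_inter_add_ncard_inter [M.Finite] [N.Finite] (hMN : Disjoint M.E N.E)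
    (hI : I ⊆ M.E ∪ N.E) :
    (I ∩ M.E).ncard + (I ∩ N.E).ncard = I.ncard := by
  conv_rhs => rw [← Set.inter_union_inter_eq hI]
  exact (Set.ncard_union_eq (hMN.mono Set.inter_subset_right Set.inter_subset_right)
    (M.ground_finite.subset Set.inter_subset_right)
    (N.ground_finite.subset Set.inter_subset_right)).symm

lemma FreeProductIndep.exists_insert_of_ncard_lt [M.Finite] [N.Finite] (hMN : Disjoint M.E N.E)
    (hI : FreeProductIndep M N I) (hJ : FreeProductIndep M N J) (hIJ : I.ncard < J.ncard) :
    ∃ e ∈ J, e ∉ I ∧ FreeProductIndep M N (insert e I) := by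
  have hIsplit := ncard_inter_add_ncard_inter hMN hI.1
  have hJsplit := ncard_inter_add_ncard_inter hMN hJ.1
  have ⟨_, hIM, hIcard⟩ := hI
  obtain ⟨-, hJM, hJcard⟩ := hJ
  rcases hIcard.lt_or_eq with hslack | htight
  · by_cases hJN : J ∩ N.E ⊆ I
    · have hle := Set.ncard_le_ncard (Set.subset_inter hJN Set.inter_subset_right)
        (N.ground_finite.subset Set.inter_subset_right)
      obtain ⟨e, ⟨⟨heJ, heM⟩, heI⟩, hMe⟩ := hIM.exists_insert_of_ncard_lt hJM (by omega)
      have heI' : e ∉ I := fun h ↦ heI ⟨h, heM⟩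
      exact ⟨e, heJ, heI', hI.insert_of_mem_left hMN heM heI' hMe hslack⟩
    · obtain ⟨e, ⟨heJ, heN⟩, heI⟩ := Set.not_subset.1 hJN
      have := N.rk_mono (Set.subset_insert e (I ∩ N.E))
      exact ⟨e, heJ, heI, hI.insert_of_mem_right hMN heN heI (by omega)⟩
  · obtain ⟨e, ⟨⟨heJ, heN⟩, heI⟩, hrk⟩ :=
      N.exists_rk_insert_eq_add_one_of_lt (X := I ∩ N.E) (Y := J ∩ N.E) (by omega)
    exact ⟨e, heJ, fun h ↦ heI ⟨h, heN⟩,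
      hI.insert_of_mem_right hMN heN (fun h ↦ heI ⟨h, heN⟩) (by omega)⟩

noncomputable def freeProduct (M N : Matroid α) [M.Finite] [N.Finite]
    (hMN : Disjoint M.E N.E) : Matroid α :=
  (IndepMatroid.ofFinite (M.ground_finite.union N.ground_finite) (FreeProductIndep M N)
    ⟨Set.empty_subset _, by simp, by simp⟩ (fun _ _ hJ hIJ ↦ hJ.subset hIJ)
    (fun _ _ hI hJ ↦ hI.exists_insert_of_ncard_lt hMN hJ) (fun _ hI ↦ hI.1)).matroid

variable [M.Finite] [N.Finite] {hMN : Disjoint M.E N.E}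

@[simp] lemma freeProduct_ground : (M.freeProduct N hMN).E = M.E ∪ N.E := rfl

@[simp] lemma freeProduct_indep_iff : (M.freeProduct N hMN).Indep I ↔ FreeProductIndep M N I :=
  Iff.rfl

instance : (M.freeProduct N hMN).Finite := ⟨M.ground_finite.union N.ground_finite⟩

lemma rk_freeProduct_union (hA : A ⊆ M.E) (hB : B ⊆ N.E) :
    (M.freeProduct N hMN).rk (A ∪ B) = min (M.rk A + B.ncard) (M.rk M.E + N.rk B) := by
  have hBfin : B.Finite := N.ground_finite.subset hB
  refine le_antisymm ?_ ?_
  · obtain ⟨I, hI⟩ := (M.freeProduct N hMN).exists_isBasis' (A ∪ B)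
    obtain ⟨hIE, hIM, hIcard⟩ := freeProduct_indep_iff.1 hI.indep
    have hIA : I ∩ M.E ⊆ A :=
      Set.union_inter_eq_left_of_disjoint hMN hA hB ▸ Set.inter_subset_inter_left _ hI.subset
    have hIB : I ∩ N.E ⊆ B :=
      Set.union_inter_eq_right_of_disjoint hMN hA hB ▸ Set.inter_subset_inter_left _ hI.subset
    have := hIM.ncard_le_rk hIA
    have := Set.ncard_le_ncard hIB hBfin
    have := N.rk_mono hIB
    rw [hI.rk_eq_ncard, ← ncard_inter_add_ncard_inter hMN hIE]
    omega
  · obtain ⟨IA, hIA⟩ := M.exists_isBasis' A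
    obtain ⟨IB, hIB⟩ := N.exists_isBasis' B
    have := M.rk_mono hA
    have := N.rk_le_ncard hBfin
    -- pad a basis of `B` with as many further elements of `B` as the count allows
    obtain ⟨B', hIBB', hB'B, hB'card⟩ := Set.exists_subsuperset_card_eq hIB.subset
      (n := min B.ncard (M.rk M.E + N.rk B - M.rk A)) (by rw [← hIB.rk_eq_ncard]; omega)
      (min_le_left _ _)
    have hrkB' : N.rk B' = N.rk B :=
      (N.rk_mono hB'B).antisymm (hIB.rk_eq_ncard ▸ hIB.indep.ncard_le_rk hIBB')
    have hind : (M.freeProduct N hMN).Indep (IA ∪ B') := freeProduct_indep_iff.2 <|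
      (freeProductIndep_union_iff hMN (hIA.subset.trans hA) (hB'B.trans hB)).2
        ⟨hIA.indep, by rw [hrkB', ← hIA.rk_eq_ncard]; omega⟩
    have := hind.ncard_le_rk (Set.union_subset_union hIA.subset hB'B)
    rw [Set.ncard_union_eq ((hMN.mono hA hB).mono hIA.subset hB'B) hIA.indep.finite
      (hBfin.subset hB'B), ← hIA.rk_eq_ncard] at this
    omega

lemma rk_freeProduct_of_subset_left (hX : X ⊆ M.E) : (M.freeProduct N hMN).rk X = M.rk X := by
  have := rk_freeProduct_union (hMN := hMN) hX (Set.empty_subset N.E)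
  rw [Set.union_empty, Set.ncard_empty, N.empty_indep.rk_eq_ncard, Set.ncard_empty] at this
  rw [this, add_zero, add_zero, min_eq_left (M.rk_mono hX)]

lemma rk_freeProduct_ground_union (hY : Y ⊆ N.E) :
    (M.freeProduct N hMN).rk (M.E ∪ Y) = M.rk M.E + N.rk Y := by
  rw [rk_freeProduct_union subset_rfl hY, min_eq_right]
  exact Nat.add_le_add_left (N.rk_le_ncard (N.ground_finite.subset hY)) _


lemma eq_ground_of_cyclicFlat_freeProduct_union (hA : A ⊆ M.E) (hB : B ⊆ N.E)
    (hBne : B.Nonempty) (h : (M.freeProduct N hMN).CyclicFlat (A ∪ B)) : A = M.E := by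
  obtain ⟨-, hflat, hcyc⟩ := cyclicFlat_iff_rk.1 h
  refine hA.antisymm fun a haM ↦ by_contra fun haA ↦ ?_
  obtain ⟨b, hb⟩ := hBne
  have haB : a ∉ B := fun h ↦ hMN.notMem_of_mem_left haM (hB h)
  have hbA : b ∉ A := fun h ↦ hMN.notMem_of_mem_left (hA h) (hB hb)
  have hrk_a := hflat a ⟨Or.inl haM, by simp [haA, haB]⟩
  rw [← Set.insert_union, rk_freeProduct_union (Set.insert_subset haM hA) hB,
    rk_freeProduct_union hA hB] at hrk_a
  have hrk_b := hcyc b (Or.inr hb)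
  rw [Set.union_sdiff_singleton_of_notMem_left hbA,
    rk_freeProduct_union hA (Set.sdiff_subset.trans hB), rk_freeProduct_union hA hB] at hrk_b
  have := M.rk_mono (Set.subset_insert a A)
  have := Set.ncard_sdiff_singleton_add_one hb (N.ground_finite.subset hB)
  omega

lemma cyclicFlat_freeProduct_iff_of_subset_left (hX : X ⊆ M.E) :
    (M.freeProduct N hMN).CyclicFlat X ↔
      M.CyclicFlat X ∧ (X = M.E → ∀ e ∈ N.E, N.IsNonloop e) := by
  have hrk_right (e) (he : e ∈ N.E) : (M.freeProduct N hMN).rk (insert e X) =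
      min (M.rk X + 1) (M.rk M.E + N.rk {e}) := by
    rw [← Set.union_singleton, rk_freeProduct_union hX (Set.singleton_subset_iff.2 he),
      Set.ncard_singleton]
  constructor
  · intro h
    obtain ⟨-, hflat, hcyc⟩ := cyclicFlat_iff_rk.1 h
    refine ⟨cyclicFlat_iff_rk.2 ⟨hX, fun e he ↦ ?_, fun e he ↦ ?_⟩, ?_⟩
    · simpa only [rk_freeProduct_of_subset_left hX,
        rk_freeProduct_of_subset_left (Set.insert_subset he.1 hX)]
        using hflat e ⟨Or.inl he.1, he.2⟩
    · simpa only [rk_freeProduct_of_subset_left hX,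
        rk_freeProduct_of_subset_left (Set.sdiff_subset.trans hX)] using hcyc e he
    · rintro rfl e he
      have := hflat e ⟨Or.inr he, hMN.notMem_of_mem_right he⟩
      rw [hrk_right e he, rk_freeProduct_of_subset_left subset_rfl] at this
      have := N.rk_le_ncard (Set.finite_singleton e)
      rw [Set.ncard_singleton] at this
      rw [isNonloop_iff_rk_singleton]
      omega
  · rintro ⟨hM, hground⟩
    obtain ⟨-, hflat, hcyc⟩ := cyclicFlat_iff_rk.1 hM
    refine cyclicFlat_iff_rk.2 ⟨hX.trans Set.subset_union_left, ?_, fun e he ↦ ?_⟩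
    · rintro e ⟨heM | heN, heX⟩
      · rw [rk_freeProduct_of_subset_left hX,
          rk_freeProduct_of_subset_left (Set.insert_subset heM hX)]
        exact hflat e ⟨heM, heX⟩
      · rw [hrk_right e heN, rk_freeProduct_of_subset_left hX]
        rcases eq_or_ne X M.E with rfl | hne
        · rw [isNonloop_iff_rk_singleton.1 (hground rfl e heN)]
          omega
        · have := hM.1.rk_lt_rk_ground hne
          omega
    · rw [rk_freeProduct_of_subset_left hX,
        rk_freeProduct_of_subset_left (Set.sdiff_subset.trans hX)]
      exact hcyc e he

lemma cyclicFlat_freeProduct_ground_union_iff (hY : Y ⊆ N.E) (hYne : Y.Nonempty) :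
    (M.freeProduct N hMN).CyclicFlat (M.E ∪ Y) ↔ N.CyclicFlat Y := by
  have hrk_insert (e) (he : e ∈ N.E) : (M.freeProduct N hMN).rk (insert e (M.E ∪ Y)) =
      M.rk M.E + N.rk (insert e Y) := by
    rw [← Set.union_insert, rk_freeProduct_ground_union (Set.insert_subset he hY)]
  have hrk_delete (e) (he : e ∈ Y) : (M.freeProduct N hMN).rk ((M.E ∪ Y) \ {e}) =
      M.rk M.E + N.rk (Y \ {e}) := by
    rw [Set.union_sdiff_singleton_of_notMem_left (hMN.notMem_of_mem_right (hY he)),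
      rk_freeProduct_ground_union (Set.sdiff_subset.trans hY)]
  constructor
  · intro h
    obtain ⟨-, hflat, hcyc⟩ := cyclicFlat_iff_rk.1 h
    refine cyclicFlat_iff_rk.2 ⟨hY, fun e he ↦ ?_, fun e he ↦ ?_⟩
    · have := hflat e ⟨Or.inr he.1, by simp [hMN.notMem_of_mem_right he.1, he.2]⟩
      rw [hrk_insert e he.1, rk_freeProduct_ground_union hY] at this
      omega
    · have := hcyc e (Or.inr he)
      rw [hrk_delete e he, rk_freeProduct_ground_union hY] at this
      omega
  · intro hN
    obtain ⟨-, hflat, hcyc⟩ := cyclicFlat_iff_rk.1 hN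
    refine cyclicFlat_iff_rk.2 ⟨Set.union_subset_union_right _ hY, ?_, ?_⟩
    · rintro e ⟨heM | heN, heX⟩
      · exact absurd (Or.inl heM) heX
      · rw [hrk_insert e heN, rk_freeProduct_ground_union hY]
        have := hflat e ⟨heN, fun h ↦ heX (Or.inr h)⟩
        omega
    · rintro e (heM | heY)
      · have heY : e ∉ Y := fun h ↦ hMN.notMem_of_mem_left heM (hY h)
        rw [Set.union_sdiff_singleton_of_notMem_right heY,
          rk_freeProduct_union Set.sdiff_subset hY, rk_freeProduct_ground_union hY]
        have := M.rk_le_rk_sdiff_singleton_add_one M.E e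
        have := hN.rk_lt_ncard hYne
        omega
      · rw [hrk_delete e heY, rk_freeProduct_ground_union hY, hcyc e heY]

theorem cyclicFlat_freeProduct_iff :
    (M.freeProduct N hMN).CyclicFlat X ↔
      (M.CyclicFlat X ∧ X ≠ M.E) ∨ (∃ Y, N.CyclicFlat Y ∧ Y ≠ ∅ ∧ X = M.E ∪ Y) ∨
        (X = M.E ∧ (∀ e ∈ M.E, ¬ M.IsColoop e) ∧ ∀ e ∈ N.E, N.IsNonloop e) := by
  constructor
  · intro h
    have hXE : X ⊆ M.E ∪ N.E := h.1.subset_ground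
    rcases (X ∩ N.E).eq_empty_or_nonempty with hXN | hXN
    · have hXM : X ⊆ M.E := by
        rw [← Set.inter_union_inter_eq hXE, hXN, Set.union_empty]
        exact Set.inter_subset_right
      obtain ⟨hM, hground⟩ := (cyclicFlat_freeProduct_iff_of_subset_left hXM).1 h
      rcases eq_or_ne X M.E with rfl | hne
      · exact Or.inr (Or.inr ⟨rfl, cyclicFlat_ground_iff.1 hM, hground rfl⟩)
      · exact Or.inl ⟨hM, hne⟩
    · have hXM := eq_ground_of_cyclicFlat_freeProduct_union Set.inter_subset_right
        Set.inter_subset_right hXN ((Set.inter_union_inter_eq hXE).symm ▸ h)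
      have hX : X = M.E ∪ X ∩ N.E := by rw [← hXM, Set.inter_union_inter_eq hXE]
      rw [hX] at h
      refine Or.inr (Or.inl ⟨X ∩ N.E, ?_, hXN.ne_empty, hX⟩)
      exact (cyclicFlat_freeProduct_ground_union_iff Set.inter_subset_right hXN).1 h
  · rintro (⟨hM, hne⟩ | ⟨Y, hY, hYne, rfl⟩ | ⟨rfl, hcol, hloop⟩)
    · exact (cyclicFlat_freeProduct_iff_of_subset_left hM.1.subset_ground).2
        ⟨hM, (absurd · hne)⟩
    · exact (cyclicFlat_freeProduct_ground_union_iff hY.1.subset_ground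
        (Set.nonempty_iff_ne_empty.2 hYne)).2 hY
    · exact (cyclicFlat_freeProduct_iff_of_subset_left subset_rfl).2
        ⟨cyclicFlat_ground_iff.2 hcol, fun _ ↦ hloop⟩

end FreeProduct

end Matroid

/-- The free product via cyclic flats: for finite matroids `M`, `N` on disjoint ground sets,
there is a matroid `P` on `E(M) ∪ E(N)` whose cyclic flats are exactly the proper cyclic
flats of `M`, the sets `E(M) ∪ Y` for nonempty cyclic flats `Y` of `N`, together with `E(M)`
itself when `M` has no coloops and `N` has no loops; with ranks `r_M X`, `r_M E(M) + r_N Y`,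
and `r_M E(M)` respectively. -/
theorem exists_free_product {α : Type*} (M N : Matroid α) [M.Finite] [N.Finite]
    (hdisj : Disjoint M.E N.E) :
    ∃ P : Matroid α, P.E = M.E ∪ N.E ∧
      {X : Set α | P.CyclicFlat X} =
        ({X : Set α | M.CyclicFlat X ∧ X ≠ M.E} ∪
          {W : Set α | ∃ Y : Set α, N.CyclicFlat Y ∧ Y ≠ ∅ ∧ W = M.E ∪ Y}) ∪
        {W : Set α | W = M.E ∧ (∀ e ∈ M.E, ∃ B, M.IsBase B ∧ e ∉ B) ∧
          (∀ e ∈ N.E, ∃ B, N.IsBase B ∧ e ∈ B)} ∧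
      (∀ X : Set α, M.CyclicFlat X → X ≠ M.E → P.rk X = M.rk X) ∧
      (((∀ e ∈ M.E, ∃ B, M.IsBase B ∧ e ∉ B) ∧ (∀ e ∈ N.E, ∃ B, N.IsBase B ∧ e ∈ B)) →
        P.rk M.E = M.rk M.E) ∧
      (∀ Y : Set α, N.CyclicFlat Y → Y ≠ ∅ → P.rk (M.E ∪ Y) = M.rk M.E + N.rk Y) := by
  refine ⟨M.freeProduct N hdisj, Matroid.freeProduct_ground, ?_,
    fun X hX _ ↦ Matroid.rk_freeProduct_of_subset_left hX.1.subset_ground,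
    fun _ ↦ Matroid.rk_freeProduct_of_subset_left subset_rfl,
    fun Y hY _ ↦ Matroid.rk_freeProduct_ground_union hY.1.subset_ground⟩
  ext X
  simp only [Set.mem_ofPred_eq, Set.mem_union, Matroid.exists_isBase_notMem_iff,
    Matroid.exists_isBase_mem_iff, Matroid.cyclicFlat_freeProduct_iff, or_assoc]
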